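/- arXiv:math/0410264 — 2 statements merged into one kernel-verified Lean document; each statement's English description precedes it below -/
import Mathlib

section
/- Let L and G be lattices in Z^l with G ⊆ L, and let K be a field of characteristic 0. Then rad(I_L) = rad(I_G) if and only if L = G. -/
/-!
Send `t^m` to the class of `m` in the group algebra `K[ℤˡ/G]`. This kills `I_G` and sends
`t^{z₊} - t^{z₋}` to the unit `X^{[z₋]}` times `X^{[z]} - 1`. So if `z ∈ L`, the binomial of `z`
lies in `rad(I_L) = rad(I_G)`, and `X^{[z]} - 1` is nilpotent in `K[ℤˡ/G]`. In characteristic 0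
this forces `[z] = 0`, i.e. `z ∈ G`: if `[z]` has infinite order, `K[X]` embeds into `K[ℤˡ/G]`
via `X ↦ X^{[z]}`, and `X - 1` is not nilpotent there; if `x = X^{[z]}` has order `m`, then
`(x - 1)(1 + x + ⋯ + x^{m-1}) = 0`, and the second factor is a unit, being `m` plus a nilpotent.
-/

open MvPolynomial

/-- The binomial `t^{z₊} - t^{z₋}` associated to an integer vector `z`. -/
noncomputable def binom {n : ℕ} (K : Type*) [Field K] (u : Fin n → ℤ) :
    MvPolynomial (Fin n) K :=
  monomial (Finsupp.equivFunOnFinite.symm fun i => (u i).toNat) 1 -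
    monomial (Finsupp.equivFunOnFinite.symm fun i => (-u i).toNat) 1

/-- The lattice ideal of a lattice `L ⊆ ℤˡ`. -/
noncomputable def latticeIdeal (K : Type*) [Field K] {l : ℕ}
    (L : AddSubgroup (Fin l → ℤ)) : Ideal (MvPolynomial (Fin l) K) :=
  Ideal.span (binom K '' (L : Set (Fin l → ℤ)))

theorem eq_one_of_pow_eq_one_of_isNilpotent_sub_one {R : Type*} [CommRing R] {x : R} {m : ℕ}
    (hm : IsUnit (m : R)) (hxm : x ^ m = 1) (hx : IsNilpotent (x - 1)) : x = 1 := by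
  have hgeom : (x - 1) * ∑ i ∈ Finset.range m, x ^ i = 0 := by
    rw [mul_geom_sum, hxm, sub_self]
  have hnil : IsNilpotent (∑ i ∈ Finset.range m, (x ^ i - 1)) := by
    refine isNilpotent_sum fun i _ => ?_
    obtain ⟨t, ht⟩ := sub_dvd_pow_sub_pow x 1 i
    rw [one_pow] at ht
    rw [ht]
    exact Commute.isNilpotent_mul_right (Commute.all _ _) hx
  have hunit : IsUnit (∑ i ∈ Finset.range m, x ^ i) := by
    simpa [Finset.sum_sub_distrib] using hnil.isUnit_add_left_of_commute hm (Commute.all _ _)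
  exact sub_eq_zero.mp (hunit.mul_left_eq_zero.mp hgeom)

namespace AddMonoidAlgebra

theorem not_isNilpotent_single_sub_one {R Q : Type*} [CommRing R] [Nontrivial R]
    [AddLeftCancelMonoid Q] {c : Q} (hc : ¬IsOfFinAddOrder c) :
    ¬IsNilpotent (single c (1 : R) - 1) := by
  let φ : Polynomial R →+* AddMonoidAlgebra R Q :=
    (mapDomainRingHom R (multiplesHom Q c)).comp (Polynomial.toFinsuppIso R).toRingHom
  have hφ : Function.Injective φ :=
    (mapDomain_injective (injective_nsmul_iff_not_isOfFinAddOrder.mpr hc)).comp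
      (Polynomial.toFinsuppIso R).injective
  have hX : φ (Polynomial.X - 1) = single c 1 - 1 := by
    rw [map_sub, map_one]
    simp [φ, Polynomial.toFinsupp_X, mapDomain_single]
  rw [← hX, IsNilpotent.map_iff hφ, Polynomial.isNilpotent_iff]
  exact fun h => not_isNilpotent_one (by simpa [Polynomial.coeff_one] using h 1)

theorem eq_zero_of_isNilpotent_single_sub_one {K Q : Type*} [Field K] [CharZero K]
    [AddCancelCommMonoid Q] {c : Q} (h : IsNilpotent (single c (1 : K) - 1)) : c = 0 := by
  by_contra hc0
  by_cases hc : IsOfFinAddOrder c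
  · refine hc0 (single_left_injective one_ne_zero (?_ : single c (1 : K) = single 0 1))
    refine eq_one_of_pow_eq_one_of_isNilpotent_sub_one (m := addOrderOf c) ?_ ?_ h
    · exact (Nat.cast_ne_zero.mpr hc.addOrderOf_pos.ne').isUnit.map (algebraMap K _)
    · rw [single_pow, addOrderOf_nsmul_eq_zero, one_pow]
      rfl
  · exact not_isNilpotent_single_sub_one hc h

end AddMonoidAlgebra

namespace Finsupp

variable {σ : Type*}

def toIntFun : (σ →₀ ℕ) →+ (σ → ℤ) where
  toFun m i := m i
  map_zero' := by ext; simp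
  map_add' a b := by ext; simp

theorem toIntFun_equivFunOnFinite_symm_toNat [Finite σ] (u : σ → ℤ) :
    toIntFun (equivFunOnFinite.symm fun i => (u i).toNat) = u⁺ := by
  ext i
  simp [toIntFun, posPart_def]

theorem toIntFun_equivFunOnFinite_symm_toNat_neg [Finite σ] (u : σ → ℤ) :
    toIntFun (equivFunOnFinite.symm fun i => (-u i).toNat) = u⁻ :=
  toIntFun_equivFunOnFinite_symm_toNat (-u)

end Finsupp

section LatticeIdeal

variable (K : Type*) [Field K] {l : ℕ} (G : AddSubgroup (Fin l → ℤ))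

noncomputable def latticeQuotientHom :
    MvPolynomial (Fin l) K →+* AddMonoidAlgebra K ((Fin l → ℤ) ⧸ G) :=
  AddMonoidAlgebra.mapDomainRingHom K ((QuotientAddGroup.mk' G).comp Finsupp.toIntFun)

theorem latticeQuotientHom_monomial (m : Fin l →₀ ℕ) :
    latticeQuotientHom K G (monomial m 1) =
      AddMonoidAlgebra.single (QuotientAddGroup.mk' G (Finsupp.toIntFun m)) 1 := by
  rw [← single_eq_monomial]
  exact AddMonoidAlgebra.mapDomain_single

theorem latticeQuotientHom_binom (u : Fin l → ℤ) :
    latticeQuotientHom K G (binom K u) =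
      AddMonoidAlgebra.single (QuotientAddGroup.mk' G u⁻) 1 *
        (AddMonoidAlgebra.single (QuotientAddGroup.mk' G u) 1 - 1) := by
  rw [binom, map_sub, latticeQuotientHom_monomial, latticeQuotientHom_monomial,
    Finsupp.toIntFun_equivFunOnFinite_symm_toNat,
    Finsupp.toIntFun_equivFunOnFinite_symm_toNat_neg, mul_sub,
    AddMonoidAlgebra.single_mul_single, mul_one, mul_one, ← map_add,
    ← eq_add_of_sub_eq' (posPart_sub_negPart u)]

theorem latticeIdeal_le_ker_latticeQuotientHom :
    latticeIdeal K G ≤ RingHom.ker (latticeQuotientHom K G) := by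
  rw [latticeIdeal, Ideal.span_le]
  rintro _ ⟨u, hu, rfl⟩
  have hu0 : QuotientAddGroup.mk' G u = 0 := (QuotientAddGroup.eq_zero_iff u).mpr hu
  rw [SetLike.mem_coe, RingHom.mem_ker, latticeQuotientHom_binom, hu0]
  simp [AddMonoidAlgebra.one_def]

theorem mem_of_binom_mem_radical_latticeIdeal [CharZero K] {z : Fin l → ℤ}
    (hz : binom K z ∈ (latticeIdeal K G).radical) : z ∈ G := by
  have hnil : IsNilpotent (latticeQuotientHom K G (binom K z)) := by
    obtain ⟨n, hn⟩ := hz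
    exact ⟨n, by rw [← map_pow]; exact latticeIdeal_le_ker_latticeQuotientHom K G hn⟩
  have hunit : IsUnit (AddMonoidAlgebra.single (QuotientAddGroup.mk' G z⁻) (1 : K)) :=
    (Group.isUnit (Multiplicative.ofAdd _)).map (AddMonoidAlgebra.of K _)
  rw [latticeQuotientHom_binom, hunit.isNilpotent_unit_mul_of_commute_iff (Commute.all _ _)] at hnil
  exact (QuotientAddGroup.eq_zero_iff z).mp
    (AddMonoidAlgebra.eq_zero_of_isNilpotent_single_sub_one hnil)

end LatticeIdeal

theorem stmt5 (K : Type*) [Field K] [CharZero K] {l : ℕ}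
    (L G : AddSubgroup (Fin l → ℤ)) (hGL : G ≤ L) :
    (latticeIdeal K L).radical = (latticeIdeal K G).radical ↔ L = G := by
  refine ⟨fun h => le_antisymm (fun z hz => ?_) hGL, fun h => h ▸ rfl⟩
  exact mem_of_binom_mem_radical_latticeIdeal K G
    (h ▸ Ideal.le_radical (Ideal.subset_span ⟨z, hz, rfl⟩))
end

section
/- Let L and G be lattices in Z^l with G ⊆ L, and let K be a field of characteristic p > 0. Then rad(I_L) = rad(I_G) if and only if there exists k ∈ N with p^k L ⊆ G. -/
open MvPolynomial

/-!
In characteristic `p` the Frobenius gives `binom u ^ p ^ k = binom (p ^ k • u)`, and a binomial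
`binom v` lies in `I_G` exactly when `v ∈ G` (map `t^m` to the class of `m` in the group algebra
`K[ℤˡ ⧸ G]`). Hence `binom u ∈ rad I_G` iff `p ^ k • u ∈ G` for some `k`, so `rad I_L ≤ rad I_G`
iff every `u ∈ L` has such a `k`. Since `L` is finitely generated, one `k` works for all of `L`.
-/

theorem Int.toNat_natCast_mul (n : ℕ) (x : ℤ) : ((n : ℤ) * x).toNat = n * x.toNat := by
  rcases le_total 0 x with hx | hx
  · rw [Int.toNat_mul (Int.natCast_nonneg n) hx, Int.toNat_natCast]
  · rw [Int.toNat_of_nonpos hx, mul_zero,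
      Int.toNat_of_nonpos (Int.mul_nonpos_of_nonneg_of_nonpos (Int.natCast_nonneg n) hx)]

theorem Submodule.exists_pow_smul_mem_of_fg {R M : Type*} [CommSemiring R] [AddCommMonoid M]
    [Module R M] {N : Submodule R M} (hN : N.FG) (P : Submodule R M) (a : R)
    (h : ∀ x ∈ N, ∃ k : ℕ, a ^ k • x ∈ P) : ∃ k : ℕ, ∀ x ∈ N, a ^ k • x ∈ P := by
  classical
  obtain ⟨s, rfl⟩ := hN
  choose! k hk using h
  refine ⟨s.sup k, fun x hx => ?_⟩
  suffices span R s ≤ P.comap (a ^ s.sup k • LinearMap.id) from this hx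
  refine span_le.2 fun y hy => ?_
  have hky : a ^ k y • y ∈ P := hk y (subset_span hy)
  rw [SetLike.mem_coe, mem_comap, LinearMap.smul_apply, LinearMap.id_apply,
    ← Nat.sub_add_cancel (Finset.le_sup hy), pow_add, mul_smul]
  exact P.smul_mem _ hky

section

variable (K : Type*) [Field K] {l : ℕ}

theorem binom_pow_expChar_pow (p : ℕ) [ExpChar K p] (u : Fin l → ℤ) (k : ℕ) :
    binom K u ^ p ^ k = binom K ((p : ℤ) ^ k • u) := by
  have hexp : ∀ v : Fin l → ℤ, (Finsupp.equivFunOnFinite.symm fun i => ((p : ℤ) ^ k * v i).toNat)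
      = p ^ k • Finsupp.equivFunOnFinite.symm fun i => (v i).toNat := fun v => by
    ext i
    simp [← Int.toNat_natCast_mul]
  simp only [binom, sub_pow_expChar_pow, monomial_pow, one_pow, Pi.smul_apply, smul_eq_mul,
    ← mul_neg, hexp]

theorem latticeIdeal_mono {G L : AddSubgroup (Fin l → ℤ)} (h : G ≤ L) :
    latticeIdeal K G ≤ latticeIdeal K L :=
  Ideal.span_mono (Set.image_mono h)

def natExponentHom (l : ℕ) : (Fin l →₀ ℕ) →+ (Fin l → ℤ) where
  toFun m i := m i
  map_zero' := by ext; simp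
  map_add' _ _ := by ext; simp

noncomputable def monomialToQuotient (G : AddSubgroup (Fin l → ℤ)) :
    MvPolynomial (Fin l) K →ₐ[K] AddMonoidAlgebra K ((Fin l → ℤ) ⧸ G) :=
  AddMonoidAlgebra.mapDomainAlgHom K K ((QuotientAddGroup.mk' G).comp (natExponentHom l))

theorem monomialToQuotient_binom_eq_zero_iff (G : AddSubgroup (Fin l → ℤ)) (u : Fin l → ℤ) :
    monomialToQuotient K G (binom K u) = 0 ↔ u ∈ G := by
  have hu : natExponentHom l (Finsupp.equivFunOnFinite.symm fun i => (u i).toNat) -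
      natExponentHom l (Finsupp.equivFunOnFinite.symm fun i => (-u i).toNat) = u := by
    ext i
    exact Int.toNat_sub_toNat_neg (u i)
  rw [binom, map_sub, sub_eq_zero]
  simp only [monomialToQuotient, AddMonoidAlgebra.mapDomainAlgHom_apply, monomial,
    AddMonoidAlgebra.lsingle_apply, AddMonoidAlgebra.mapDomain_single]
  rw [AddMonoidAlgebra.single_left_inj one_ne_zero, AddMonoidHom.comp_apply,
    AddMonoidHom.comp_apply, QuotientAddGroup.mk'_apply, QuotientAddGroup.mk'_apply,
    QuotientAddGroup.eq_iff_sub_mem, hu]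

theorem binom_mem_latticeIdeal_iff (G : AddSubgroup (Fin l → ℤ)) (u : Fin l → ℤ) :
    binom K u ∈ latticeIdeal K G ↔ u ∈ G := by
  refine ⟨fun hu => ?_, fun hu => Ideal.subset_span ⟨u, hu, rfl⟩⟩
  have hker : latticeIdeal K G ≤ RingHom.ker (monomialToQuotient K G) :=
    Ideal.span_le.2 fun _ ⟨v, hv, hbinom⟩ =>
      hbinom ▸ (monomialToQuotient_binom_eq_zero_iff K G v).2 hv
  exact (monomialToQuotient_binom_eq_zero_iff K G u).1 (hker hu)

theorem binom_mem_radical_latticeIdeal_iff {p : ℕ} (hp : p.Prime) [CharP K p]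
    (G : AddSubgroup (Fin l → ℤ)) (u : Fin l → ℤ) :
    binom K u ∈ (latticeIdeal K G).radical ↔ ∃ k : ℕ, (p : ℤ) ^ k • u ∈ G := by
  have : Fact p.Prime := ⟨hp⟩
  simp only [← binom_mem_latticeIdeal_iff K, ← binom_pow_expChar_pow K p]
  refine ⟨fun ⟨n, hn⟩ => ⟨n, Ideal.pow_mem_of_pow_mem _ hn (Nat.lt_pow_self hp.one_lt).le⟩,
    fun ⟨k, hk⟩ => ⟨p ^ k, hk⟩⟩

theorem radical_latticeIdeal_le_iff {p : ℕ} (hp : p.Prime) [CharP K p]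
    (L G : AddSubgroup (Fin l → ℤ)) :
    (latticeIdeal K L).radical ≤ (latticeIdeal K G).radical ↔
      ∀ u ∈ L, ∃ k : ℕ, (p : ℤ) ^ k • u ∈ G := by
  rw [Ideal.radical_le_radical_iff, latticeIdeal, Ideal.span_le, Set.image_subset_iff]
  exact forall₂_congr fun u _ => binom_mem_radical_latticeIdeal_iff K hp G u

end

theorem stmt6 (K : Type*) [Field K] (p : ℕ) (hp : p.Prime) [CharP K p] {l : ℕ}
    (L G : AddSubgroup (Fin l → ℤ)) (hGL : G ≤ L) :
    (latticeIdeal K L).radical = (latticeIdeal K G).radical ↔ ∃ k : ℕ, ∀ u ∈ L, (p : ℤ) ^ k • u ∈ G := by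
  have hrad : (latticeIdeal K G).radical ≤ (latticeIdeal K L).radical :=
    Ideal.radical_mono (latticeIdeal_mono K hGL)
  rw [le_antisymm_iff, and_iff_left hrad, radical_latticeIdeal_le_iff K hp]
  refine ⟨fun h => ?_, fun ⟨k, hk⟩ u hu => ⟨k, hk u hu⟩⟩
  exact Submodule.exists_pow_smul_mem_of_fg (IsNoetherian.noetherian L.toIntSubmodule)
    G.toIntSubmodule (p : ℤ) h
end
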